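/- Let π be a set of primes and G a π-divisible nilpotent group (every element of G has a p-th root in G for each p ∈ π). Then every term Z_i(G) of the upper central series of G is π-divisible as well. -/

import Mathlib

/-!
If `h ^ p` is central and all commutators `⁅h, g⁆` are central, then `⁅h, k ^ p⁆ = ⁅h, k⁆ ^ p =
⁅h ^ p, k⁆ = 1`, so `h` commutes with every `p`-th power, i.e. with everything when `G` is
`p`-divisible. If only `h ^ p` is known to be central, the image of `h` in `G ⧸ center G` has
trivial `p`-th power, so by induction on the nilpotency class it is central there; thus
`h ∈ Z₂(G)` and its commutators are central. Hence `p`-th roots of central elements are central,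
and passing to `G ⧸ center G` once more, the same holds for every `Zᵢ₊₁(G)`.
-/

open scoped commutatorElement

section

open Subgroup

theorem commutatorElement_pow_left_of_mem_center {G : Type*} [Group G] {h g : G}
    (hc : ⁅h, g⁆ ∈ center G) (n : ℕ) : ⁅h ^ n, g⁆ = ⁅h, g⁆ ^ n := by
  induction n with
  | zero => simp
  | succ n ih =>
    have hconj : h * ⁅h, g⁆ ^ n * h⁻¹ = ⁅h, g⁆ ^ n := by
      rw [mem_center_iff.mp (pow_mem hc n) h, mul_inv_cancel_right]
    calc ⁅h ^ (n + 1), g⁆ = h * ⁅h ^ n, g⁆ * h⁻¹ * ⁅h, g⁆ := by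
          simp only [commutatorElement_def]; group
      _ = ⁅h, g⁆ ^ (n + 1) := by rw [ih, hconj, pow_succ]

theorem commutatorElement_pow_right_of_mem_center {G : Type*} [Group G] {h g : G}
    (hc : ⁅h, g⁆ ∈ center G) (n : ℕ) : ⁅h, g ^ n⁆ = ⁅h, g⁆ ^ n := by
  have hc' : ⁅g, h⁆ ∈ center G := commutatorElement_inv h g ▸ inv_mem hc
  rw [← commutatorElement_inv, commutatorElement_pow_left_of_mem_center hc', ← inv_pow,
    commutatorElement_inv]

theorem MonoidHom.surjective_pow_of_surjective {M N : Type*} [Monoid M] [Monoid N]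
    (f : M →* N) (hf : Function.Surjective f) {p : ℕ}
    (hp : Function.Surjective fun x : M ↦ x ^ p) : Function.Surjective fun y : N ↦ y ^ p := by
  intro y
  obtain ⟨x, rfl⟩ := hf y
  obtain ⟨r, rfl⟩ := hp x
  exact ⟨f r, (map_pow f r p).symm⟩

theorem mem_center_of_pow_mem_center_of_forall_commutatorElement_mem {G : Type*} [Group G]
    {p : ℕ} (hp : Function.Surjective fun x : G ↦ x ^ p) {h : G}
    (hcomm : ∀ g, ⁅h, g⁆ ∈ center G) (hh : h ^ p ∈ center G) : h ∈ center G := by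
  refine mem_center_iff.mpr fun g ↦ ?_
  obtain ⟨k, rfl⟩ := hp g
  have hk : ⁅h, k ^ p⁆ = 1 := by
    rw [commutatorElement_pow_right_of_mem_center (hcomm k),
      ← commutatorElement_pow_left_of_mem_center (hcomm k),
      commutatorElement_eq_one_iff_mul_comm, mem_center_iff.mp hh]
  exact (commutatorElement_eq_one_iff_mul_comm.mp hk).symm

end

namespace Subgroup

theorem surjective_pow_quotient_center {G : Type*} [Group G] {p : ℕ}
    (hp : Function.Surjective fun x : G ↦ x ^ p) :
    Function.Surjective fun y : G ⧸ center G ↦ y ^ p :=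
  (QuotientGroup.mk' (center G)).surjective_pow_of_surjective (QuotientGroup.mk'_surjective _) hp

theorem mem_center_of_pow_mem_center {G : Type*} [Group G] [Group.IsNilpotent G] {p : ℕ}
    (hp : Function.Surjective fun x : G ↦ x ^ p) {h : G} (hh : h ^ p ∈ center G) :
    h ∈ center G := by
  refine Group.nilpotent_center_quotient_ind (P := fun G _ _ ↦ ∀ h : G,
    Function.Surjective (fun x : G ↦ x ^ p) → h ^ p ∈ center G → h ∈ center G) G ?_ ?_ h hp hh
  · exact fun G _ _ _ _ _ ↦ mem_center_iff.mpr fun _ ↦ Subsingleton.elim _ _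
  · intro G _ _ ih h hp hh
    have hQ : (h : G ⧸ center G) ∈ center (G ⧸ center G) := by
      refine ih _ (surjective_pow_quotient_center hp) ?_
      rw [← QuotientGroup.mk_pow, (QuotientGroup.eq_one_iff _).mpr hh]
      exact one_mem _
    have h2 : h ∈ upperCentralSeries G 2 := by
      rwa [← comap_upperCentralSeries_quotient_center, upperCentralSeries_one]
    refine mem_center_of_pow_mem_center_of_forall_commutatorElement_mem hp (fun g ↦ ?_) hh
    rw [← upperCentralSeries_one]
    exact mem_upperCentralSeries_succ_iff.mp h2 g

theorem mem_upperCentralSeries_succ_of_pow_mem {G : Type*} [Group G] [Group.IsNilpotent G]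
    {p : ℕ} (hp : Function.Surjective fun x : G ↦ x ^ p) (n : ℕ) {h : G}
    (hh : h ^ p ∈ upperCentralSeries G (n + 1)) : h ∈ upperCentralSeries G (n + 1) := by
  induction n generalizing G with
  | zero =>
    rw [upperCentralSeries_one] at hh ⊢
    exact mem_center_of_pow_mem_center hp hh
  | succ n ih =>
    rw [← comap_upperCentralSeries_quotient_center] at hh ⊢
    exact ih (surjective_pow_quotient_center hp) hh

end Subgroup

theorem upperCentralSeries_pi_divisible_general
    {G : Type*} [Group G] [Group.IsNilpotent G]
    (π : Set ℕ)
    (hdiv : ∀ g : G, ∀ p ∈ π, ∃ h : G, h ^ p = g) :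
    ∀ i : ℕ, ∀ z ∈ upperCentralSeries G i, ∀ p ∈ π,
      ∃ w ∈ upperCentralSeries G i, w ^ p = z := by
  intro i z hz p hp
  cases i with
  | zero => exact ⟨1, Subgroup.one_mem _, by rw [one_pow, Subgroup.mem_bot.mp hz]⟩
  | succ n =>
    obtain ⟨w, rfl⟩ := hdiv z p hp
    exact ⟨w, Subgroup.mem_upperCentralSeries_succ_of_pow_mem (fun g ↦ hdiv g p hp) n hz, rfl⟩

/-- In a π-divisible nilpotent group, every term of the upper central series
is π-divisible. -/
theorem upperCentralSeries_pi_divisible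
    {G : Type*} [Group G] [Group.IsNilpotent G]
    (π : Set ℕ) (hπ : ∀ p ∈ π, p.Prime)
    (hdiv : ∀ g : G, ∀ p ∈ π, ∃ h : G, h ^ p = g) :
    ∀ i : ℕ, ∀ z ∈ upperCentralSeries G i, ∀ p ∈ π,
      ∃ w ∈ upperCentralSeries G i, w ^ p = z :=
  upperCentralSeries_pi_divisible_general π hdiv
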